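/- arXiv:2409.06797 — 6 statements merged into one kernel-verified Lean document; each statement's English description precedes it below -/
import Mathlib

section
/- Let A be an n×n real matrix, D an m×m real matrix, and B an n×m real matrix. For every s ∈ ℝ, the matrix exponential of the block upper-triangular matrix satisfies exp(s · fromBlocks A B 0 D) = fromBlocks (exp(sA)) (∫_{u=0}^{s} exp((s−u)A) · B · exp(uD) du) 0 (exp(sD)). -/
/-!
Duhamel's formula `exp (t M) = exp (t P) + ∫₀ᵗ exp ((t - u) M) (M - P) exp (u P) du`, applied to
`M = fromBlocks A B 0 D` and its block diagonal part `P`, gives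
`exp (t M) = fromBlocks (exp (t A)) (∫₀ᵗ X (t - u) B exp (u D) du) 0 (exp (t D))`, where `X w` is the
top-left block of `exp (w M)`: since `exp (w M)` is again block upper triangular, the integrand
only has a top-right block. Reading off the top-left block gives `X w = exp (w A)`.
-/

open Matrix NormedSpace
open scoped Matrix.Norms.L2Operator

section Duhamel

variable {𝔸 : Type*} [NormedRing 𝔸] [NormedAlgebra ℝ 𝔸] [CompleteSpace 𝔸]

theorem continuous_exp_smul (M : 𝔸) : Continuous fun u : ℝ => exp (u • M) :=
  continuous_iff_continuousAt.2 fun u => (hasDerivAt_exp_smul_const M u).continuousAt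

theorem exp_smul_eq_exp_smul_add_integral (M P : 𝔸) (t : ℝ) :
    exp (t • M) = exp (t • P) + ∫ u in (0 : ℝ)..t, exp ((t - u) • M) * (M - P) * exp (u • P) := by
  have hderiv : ∀ u, HasDerivAt (fun u => exp ((t - u) • M) * exp (u • P))
      (-(exp ((t - u) • M) * (M - P) * exp (u • P))) u := by
    intro u
    have hM : HasDerivAt (fun u => exp ((t - u) • M)) (-(exp ((t - u) • M) * M)) u := by
      simpa [Function.comp_def] using
        (hasDerivAt_exp_smul_const M (t - u)).scomp u ((hasDerivAt_id u).const_sub t)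
    convert hM.fun_mul (hasDerivAt_exp_smul_const' P u) using 1
    simp only [mul_sub, sub_mul, mul_assoc, neg_mul]
    abel
  have hcont : Continuous fun u => exp ((t - u) • M) * (M - P) * exp (u • P) :=
    (((continuous_exp_smul M).comp (continuous_sub_left t)).mul continuous_const).mul
      (continuous_exp_smul P)
  have hFTC := intervalIntegral.integral_eq_sub_of_hasDerivAt (fun u _ => hderiv u)
    (hcont.neg.intervalIntegrable 0 t)
  simp only [intervalIntegral.integral_neg, sub_zero, sub_self, zero_smul, exp_zero, one_mul,
    mul_one] at hFTC
  rw [neg_eq_iff_eq_neg, neg_sub] at hFTC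
  rw [hFTC, add_sub_cancel]

end Duhamel

namespace Matrix

variable {n m : Type*} [Fintype n] [DecidableEq n] [Fintype m] [DecidableEq m]

def fromBlocksDiagRingHom (α : Type*) [Semiring α] :
    Matrix n n α × Matrix m m α →+* Matrix (n ⊕ m) (n ⊕ m) α where
  toFun x := fromBlocks x.1 0 0 x.2
  map_one' := fromBlocks_one
  map_mul' x y := by simp [fromBlocks_multiply]
  map_zero' := fromBlocks_zero
  map_add' x y := by simp [fromBlocks_add]

theorem exp_fromBlocks_zero_zero (A : Matrix n n ℝ) (D : Matrix m m ℝ) :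
    exp (fromBlocks A 0 0 D) = fromBlocks (exp A) 0 0 (exp D) := by
  let _ : NormedAlgebra ℚ (Matrix n n ℝ) := NormedAlgebra.restrictScalars ℚ ℝ _
  let _ : NormedAlgebra ℚ (Matrix m m ℝ) := NormedAlgebra.restrictScalars ℚ ℝ _
  have h := map_exp (fromBlocksDiagRingHom (n := n) (m := m) ℝ)
    (continuous_fst.matrix_fromBlocks continuous_const continuous_const continuous_snd) (A, D)
  simpa [fromBlocksDiagRingHom] using h.symm

theorem toBlocks₂₁_exp_fromBlocks (A : Matrix n n ℝ) (B : Matrix n m ℝ) (D : Matrix m m ℝ) :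
    (exp (fromBlocks A B 0 D)).toBlocks₂₁ = 0 := by
  have h := (upper_two_blockTriangular A B D zero_lt_one (α := ℕ)).exp
  ext i j
  exact h (by simp)

theorem fromBlocks_intervalIntegral {f : ℝ → Matrix n m ℝ} {a b : ℝ}
    (hf : IntervalIntegrable f MeasureTheory.volume a b) :
    fromBlocks 0 (∫ u in a..b, f u) 0 0 =
      ∫ u in a..b, fromBlocks (0 : Matrix n n ℝ) (f u) 0 (0 : Matrix m m ℝ) := by
  let ι : Matrix n m ℝ →ₗ[ℝ] Matrix (n ⊕ m) (n ⊕ m) ℝ :=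
    { toFun X := fromBlocks 0 X 0 0
      map_add' X Y := by simp [fromBlocks_add]
      map_smul' c X := by simp [fromBlocks_smul] }
  exact ((LinearMap.toContinuousLinearMap ι).intervalIntegral_comp_comm hf).symm

theorem exp_smul_fromBlocks_eq_fromBlocks_integral (A : Matrix n n ℝ) (B : Matrix n m ℝ)
    (D : Matrix m m ℝ) (t : ℝ) :
    exp (t • fromBlocks A B 0 D) =
      fromBlocks (exp (t • A))
        (∫ u in (0 : ℝ)..t, (exp ((t - u) • fromBlocks A B 0 D)).toBlocks₁₁ * B * exp (u • D))
        0 (exp (t • D)) := by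
  set M := fromBlocks A B 0 D
  have hdiag : ∀ u : ℝ,
      exp (u • fromBlocks A 0 0 D) = fromBlocks (exp (u • A)) 0 0 (exp (u • D)) := fun u => by
    rw [fromBlocks_smul, smul_zero, smul_zero, exp_fromBlocks_zero_zero]
  have hN : M - fromBlocks A 0 0 D = fromBlocks 0 B 0 0 := by
    rw [sub_eq_iff_eq_add, fromBlocks_add]
    simp [M]
  have hintegrand : ∀ u : ℝ,
      exp ((t - u) • M) * fromBlocks 0 B 0 0 * exp (u • fromBlocks A 0 0 D) =
        fromBlocks 0 ((exp ((t - u) • M)).toBlocks₁₁ * B * exp (u • D)) 0 0 := by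
    intro u
    have h₂₁ : (exp ((t - u) • M)).toBlocks₂₁ = 0 := by
      rw [fromBlocks_smul, smul_zero]
      exact toBlocks₂₁_exp_fromBlocks _ _ _
    rw [hdiag]
    conv_lhs => rw [← fromBlocks_toBlocks (exp ((t - u) • M)), h₂₁]
    simp [fromBlocks_multiply]
  have hcont : Continuous fun u : ℝ => (exp ((t - u) • M)).toBlocks₁₁ * B * exp (u • D) :=
    ((((continuous_exp_smul M).comp (continuous_sub_left t)).matrix_submatrix Sum.inl
      Sum.inl).matrix_mul continuous_const).matrix_mul (continuous_exp_smul D)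
  rw [exp_smul_eq_exp_smul_add_integral M (fromBlocks A 0 0 D), hdiag, hN]
  simp_rw [hintegrand]
  rw [← fromBlocks_intervalIntegral (hcont.intervalIntegrable _ _), fromBlocks_add]
  simp

theorem toBlocks₁₁_exp_smul_fromBlocks (A : Matrix n n ℝ) (B : Matrix n m ℝ)
    (D : Matrix m m ℝ) (t : ℝ) :
    (exp (t • fromBlocks A B 0 D)).toBlocks₁₁ = exp (t • A) := by
  rw [exp_smul_fromBlocks_eq_fromBlocks_integral, toBlocks_fromBlocks₁₁]

end Matrix

/-- The matrix exponential of a block upper-triangular matrix: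
`exp (s • fromBlocks A B 0 D)` has diagonal blocks `exp (s•A)`, `exp (s•D)`,
top-right block `∫_{0}^{s} exp((s−u)A) * B * exp(uD) du`, and zero bottom-left block. -/
theorem exp_fromBlocks_upper_triangular
    (n m : ℕ) (A : Matrix (Fin n) (Fin n) ℝ) (D : Matrix (Fin m) (Fin m) ℝ)
    (B : Matrix (Fin n) (Fin m) ℝ) (s : ℝ) :
    exp (s • Matrix.fromBlocks A B 0 D) =
      Matrix.fromBlocks (exp (s • A))
        (∫ u in (0:ℝ)..s, exp ((s - u) • A) * B * exp (u • D))
        0 (exp (s • D)) := by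
  rw [exp_smul_fromBlocks_eq_fromBlocks_integral]
  simp_rw [toBlocks₁₁_exp_smul_fromBlocks]
end

section
/- Let τ > 0, let A be an n×n real matrix such that I − τA is invertible and A commutes with B := (I − τA)⁻¹ (which holds automatically), let R be an n×n real matrix, Q := (1/2)·R·Rᵀ, let C be a symmetric n×n real matrix, and set L := fromBlocks A R 0 (−(1/τ)·I) and Σ := fromBlocks C ((1/2)·B·R) ((1/2)·Rᵀ·Bᵀ) ((1/(2τ))·I). Then L·Σ + Σ·Lᵀ + (1/τ²)·fromBlocks 0 0 0 I = 0 if and only if A·C + C·Aᵀ + B·Q + Q·Bᵀ = 0 (the colored-noise fluctuation–dissipation relation). -/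
open Matrix

/-- The augmented (white-noise) Lyapunov equation for the colored-noise system,
`L·Σ + Σ·Lᵀ + (1/τ²)·fromBlocks 0 0 0 I = 0`, holds if and only if the colored-noise
fluctuation–dissipation relation `A·C + C·Aᵀ + B·Q + Q·Bᵀ = 0` holds, where
`B = (I − τA)⁻¹` and `Q = (1/2)·R·Rᵀ`. -/
theorem augmented_lyapunov_iff_colored_fdr
    (n : ℕ) (τ : ℝ) (hτ : 0 < τ)
    (A R C : Matrix (Fin n) (Fin n) ℝ)
    (hinv : IsUnit (1 - τ • A))
    (hcomm : A * (1 - τ • A)⁻¹ = (1 - τ • A)⁻¹ * A)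
    (hC : Cᵀ = C) :
    (Matrix.fromBlocks A R 0 (-(1/τ) • (1 : Matrix (Fin n) (Fin n) ℝ)) *
        Matrix.fromBlocks C ((1/2 : ℝ) • ((1 - τ • A)⁻¹ * R))
          ((1/2 : ℝ) • (Rᵀ * ((1 - τ • A)⁻¹)ᵀ)) ((1/(2*τ)) • (1 : Matrix (Fin n) (Fin n) ℝ)) +
      Matrix.fromBlocks C ((1/2 : ℝ) • ((1 - τ • A)⁻¹ * R))
          ((1/2 : ℝ) • (Rᵀ * ((1 - τ • A)⁻¹)ᵀ)) ((1/(2*τ)) • (1 : Matrix (Fin n) (Fin n) ℝ)) *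
        (Matrix.fromBlocks A R 0 (-(1/τ) • (1 : Matrix (Fin n) (Fin n) ℝ)))ᵀ +
      (1/τ^2) • Matrix.fromBlocks 0 0 0 (1 : Matrix (Fin n) (Fin n) ℝ) = 0)
    ↔
    (A * C + C * Aᵀ + (1 - τ • A)⁻¹ * ((1/2 : ℝ) • (R * Rᵀ)) +
        ((1/2 : ℝ) • (R * Rᵀ)) * ((1 - τ • A)⁻¹)ᵀ = 0) := by
  set B := (1 - τ • A)⁻¹ with hBdef
  have hτ0 : (τ : ℝ) ≠ 0 := ne_of_gt hτ
  have hB : (1 - τ • A) * B = 1 :=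
    Matrix.mul_nonsing_inv _ ((Matrix.isUnit_iff_isUnit_det _).mp hinv)
  have hAB : A * B = (1/τ) • B - (1/τ) • 1 := by
    have h1 : B - τ • (A * B) = 1 := by
      have := hB
      rwa [sub_mul, one_mul, smul_mul_assoc] at this
    have h2 : τ • (A * B) = B - 1 := by rw [← h1]; abel
    have h3 : A * B = (1/τ) • (B - 1) := by
      rw [← h2, smul_smul, one_div, inv_mul_cancel₀ hτ0, one_smul]
    rw [h3, smul_sub]
  have hBA : Bᵀ * Aᵀ = (1/τ) • Bᵀ - (1/τ) • 1 := by
    have := congrArg Matrix.transpose hAB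
    simpa [Matrix.transpose_smul, Matrix.transpose_sub] using this
  have hABR : A * (B * R) = (1/τ) • (B * R) - (1/τ) • R := by
    rw [← Matrix.mul_assoc, hAB, Matrix.sub_mul, Matrix.smul_mul, Matrix.smul_mul, Matrix.one_mul]
  have hBAR : Rᵀ * Bᵀ * Aᵀ = (1/τ) • (Rᵀ * Bᵀ) - (1/τ) • Rᵀ := by
    rw [Matrix.mul_assoc, hBA, Matrix.mul_sub, Matrix.mul_smul, Matrix.mul_smul, Matrix.mul_one]
  rw [show (0 : Matrix (Fin n ⊕ Fin n) (Fin n ⊕ Fin n) ℝ) = Matrix.fromBlocks 0 0 0 0 from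
    Matrix.fromBlocks_zero.symm]
  rw [Matrix.fromBlocks_transpose, Matrix.fromBlocks_multiply, Matrix.fromBlocks_multiply,
    Matrix.fromBlocks_smul, Matrix.fromBlocks_add, Matrix.fromBlocks_add, Matrix.fromBlocks_inj]
  constructor
  · rintro ⟨h, -, -, -⟩
    simp only [Matrix.mul_smul, Matrix.smul_mul, Matrix.mul_assoc] at h ⊢
    linear_combination (norm := module) h
  · intro h
    simp only [Matrix.mul_smul, Matrix.smul_mul, Matrix.mul_assoc] at h
    refine ⟨?_, ?_, ?_, ?_⟩
    · simp only [Matrix.mul_smul, Matrix.smul_mul, Matrix.mul_assoc]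
      linear_combination (norm := module) h
    · simp only [Matrix.mul_smul, Matrix.smul_mul, Matrix.transpose_smul, Matrix.transpose_one,
        Matrix.transpose_zero, Matrix.mul_one, Matrix.one_mul, Matrix.mul_zero, Matrix.zero_mul,
        hABR]
      module
    · simp only [Matrix.mul_smul, Matrix.smul_mul, Matrix.transpose_smul, Matrix.transpose_one,
        Matrix.transpose_zero, Matrix.mul_one, Matrix.one_mul, Matrix.mul_zero, Matrix.zero_mul,
        hBAR]
      module
    · simp only [Matrix.mul_smul, Matrix.smul_mul, Matrix.transpose_smul, Matrix.transpose_one,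
        Matrix.transpose_zero, Matrix.mul_one, Matrix.one_mul, Matrix.mul_zero, Matrix.zero_mul]
      module
end

section
/- Let τ > 0, let A be an n×n real matrix such that I − τA is invertible, set B := (I − τA)⁻¹, let Q and C be n×n real matrices, and define K_c(s) := exp(sA)·C + exp(sA)·(∫_{u=0}^{s} e^{−u/τ}·exp(−uA) du)·Q·Bᵀ. Then K_c is twice differentiable and its derivatives at 0 encode the linear dynamics via the identity τ·K_c″(0) + K_c′(0) = A·(τ·K_c′(0) + C); consequently, if the matrix τ·K_c′(0) + C is invertible, then A = (τ·K_c″(0) + K_c′(0))·(τ·K_c′(0) + C)⁻¹. -/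
open Matrix NormedSpace
open scoped Matrix.Norms.L2Operator

/-- The correlation function `K_c(s)` of the stationary colored-noise-driven linear system,
with noise-memory matrix `B = (I − τA)⁻¹` (Eq. (8) of the paper). -/
noncomputable def coloredCorrelation (n : ℕ) (τ : ℝ) (A Q C : Matrix (Fin n) (Fin n) ℝ)
    (s : ℝ) : Matrix (Fin n) (Fin n) ℝ :=
  exp (s • A) * C +
    exp (s • A) * (∫ u in (0:ℝ)..s, Real.exp (-u/τ) • exp ((-u) • A)) * Q *
      ((1 - τ • A)⁻¹)ᵀ

/-!
Writing `E = Q Bᵀ` and `r(s) = e^{-s/τ}`, the function `K_c(s) = e^{sA} (C + (∫₀ˢ r(u) e^{-uA} du) E)`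
is the variation-of-constants solution of `K' = A K + r E` with `K(0) = C`: the factor `e^{sA}`
cancels `e^{-sA}` in the integrand. Differentiating once more gives `K'' = A K' + r' E`, and since
`τ r' + r = 0` the forcing terms cancel in `τ K'' + K' = A (τ K' + K)`.
-/

section

variable {𝔸 : Type*} [NormedRing 𝔸] [NormedAlgebra ℝ 𝔸] {K : ℝ → 𝔸} {r r' : ℝ → ℝ} {A E : 𝔸}

theorem hasDerivAt_deriv_of_hasDerivAt_mul_add_smul
    (hK : ∀ s, HasDerivAt K (A * K s + r s • E) s) (hr : ∀ s, HasDerivAt r (r' s) s) (s : ℝ) :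
    HasDerivAt (deriv K) (A * deriv K s + r' s • E) s := by
  rw [show deriv K = fun t => A * K t + r t • E from funext fun t => (hK t).deriv]
  exact ((hK s).const_mul A).add ((hr s).smul_const E)

theorem smul_deriv_deriv_add_deriv_eq_mul {τ : ℝ}
    (hK : ∀ s, HasDerivAt K (A * K s + r s • E) s) (hr : ∀ s, HasDerivAt r (r' s) s)
    (hrel : ∀ s, τ * r' s + r s = 0) (s : ℝ) :
    τ • deriv (deriv K) s + deriv K s = A * (τ • deriv K s + K s) := by
  rw [(hasDerivAt_deriv_of_hasDerivAt_mul_add_smul hK hr s).deriv, (hK s).deriv]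
  calc τ • (A * (A * K s + r s • E) + r' s • E) + (A * K s + r s • E)
      = A * (τ • (A * K s + r s • E) + K s) + (τ * r' s + r s) • E := by
        simp only [mul_add, smul_add, mul_smul_comm, add_smul, mul_smul]; abel
    _ = A * (τ • (A * K s + r s • E) + K s) := by rw [hrel, zero_smul, add_zero]

noncomputable def variationOfConstants (A : 𝔸) (r : ℝ → ℝ) (C E : 𝔸) (t : ℝ) : 𝔸 :=
  exp (t • A) * (C + (∫ u in (0:ℝ)..t, r u • exp ((-u) • A)) * E)

theorem variationOfConstants_zero (A : 𝔸) (r : ℝ → ℝ) (C E : 𝔸) :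
    variationOfConstants A r C E 0 = C := by
  simp [variationOfConstants]

variable [CompleteSpace 𝔸]

theorem exp_smul_mul_exp_neg_smul (A : 𝔸) (s : ℝ) : exp (s • A) * exp ((-s) • A) = 1 := by
  have hball (x : 𝔸) : x ∈ Metric.eball 0 (expSeries ℝ 𝔸).radius := by
    simp [expSeries_radius_eq_top]
  rw [← exp_add_of_commute_of_mem_ball (((Commute.refl A).smul_left s).smul_right (-s))
    (hball _) (hball _), ← add_smul, add_neg_cancel, zero_smul, exp_zero]

theorem hasDerivAt_variationOfConstants (hr : Continuous r) (A C E : 𝔸) (s : ℝ) :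
    HasDerivAt (variationOfConstants A r C E)
      (A * variationOfConstants A r C E s + r s • E) s := by
  have hφ : Continuous fun u : ℝ => r u • exp ((-u) • A) :=
    hr.smul ((differentiable_exp_smul_const ℝ A).continuous.comp continuous_neg)
  have hint : HasDerivAt (fun t => ∫ u in (0:ℝ)..t, r u • exp ((-u) • A))
      (r s • exp ((-s) • A)) s :=
    (hφ.integral_hasStrictDerivAt 0 s).hasDerivAt
  refine ((hasDerivAt_exp_smul_const' A s).mul ((hint.mul_const E).const_add C)).congr_deriv ?_
  rw [variationOfConstants, smul_mul_assoc, mul_smul_comm, ← mul_assoc (exp _),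
    exp_smul_mul_exp_neg_smul, one_mul, mul_assoc]

end

theorem coloredCorrelation_eq_variationOfConstants (n : ℕ) (τ : ℝ)
    (A Q C : Matrix (Fin n) (Fin n) ℝ) :
    coloredCorrelation n τ A Q C =
      variationOfConstants A (fun u => Real.exp (-u / τ)) C (Q * ((1 - τ • A)⁻¹)ᵀ) := by
  funext s
  simp only [coloredCorrelation, variationOfConstants, mul_add, mul_assoc]

theorem coloredCorrelation_encodes_dynamics_general
    (n : ℕ) (τ : ℝ) (hτ : 0 < τ) (A Q C : Matrix (Fin n) (Fin n) ℝ) :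
    Differentiable ℝ (coloredCorrelation n τ A Q C) ∧
    Differentiable ℝ (deriv (coloredCorrelation n τ A Q C)) ∧
    τ • deriv (deriv (coloredCorrelation n τ A Q C)) 0 +
        deriv (coloredCorrelation n τ A Q C) 0 =
      A * (τ • deriv (coloredCorrelation n τ A Q C) 0 + C) ∧
    (IsUnit (τ • deriv (coloredCorrelation n τ A Q C) 0 + C) →
      A = (τ • deriv (deriv (coloredCorrelation n τ A Q C)) 0 +
            deriv (coloredCorrelation n τ A Q C) 0) *
          (τ • deriv (coloredCorrelation n τ A Q C) 0 + C)⁻¹) := by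
  rw [coloredCorrelation_eq_variationOfConstants]
  have hK := hasDerivAt_variationOfConstants (A := A) (C := C) (E := Q * ((1 - τ • A)⁻¹)ᵀ)
    (show Continuous fun u : ℝ => Real.exp (-u / τ) by fun_prop)
  have hr (s : ℝ) : HasDerivAt (fun u => Real.exp (-u / τ)) (-Real.exp (-s / τ) / τ) s := by
    simpa [div_eq_mul_inv] using ((hasDerivAt_id s).neg.div_const τ).exp
  have hrel (s : ℝ) : τ * (-Real.exp (-s / τ) / τ) + Real.exp (-s / τ) = 0 := by
    rw [mul_div_cancel₀ _ hτ.ne', neg_add_cancel]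
  have key := smul_deriv_deriv_add_deriv_eq_mul hK hr hrel 0
  rw [variationOfConstants_zero] at key
  refine ⟨fun s => (hK s).differentiableAt,
    fun s => (hasDerivAt_deriv_of_hasDerivAt_mul_add_smul hK hr s).differentiableAt, key,
    fun hU => ?_⟩
  rw [key, Matrix.mul_nonsing_inv_cancel_right _ _ ((Matrix.isUnit_iff_isUnit_det _).mp hU)]

/-- `K_c` is twice differentiable and its derivatives at `0` encode the linear dynamics:
`τ·K_c″(0) + K_c′(0) = A·(τ·K_c′(0) + C)`; consequently, if `τ·K_c′(0) + C` is invertible,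
then `A = (τ·K_c″(0) + K_c′(0))·(τ·K_c′(0) + C)⁻¹`. -/
theorem coloredCorrelation_encodes_dynamics
    (n : ℕ) (τ : ℝ) (hτ : 0 < τ) (A Q C : Matrix (Fin n) (Fin n) ℝ)
    (hinv : IsUnit (1 - τ • A)) :
    Differentiable ℝ (coloredCorrelation n τ A Q C) ∧
    Differentiable ℝ (deriv (coloredCorrelation n τ A Q C)) ∧
    τ • deriv (deriv (coloredCorrelation n τ A Q C)) 0 +
        deriv (coloredCorrelation n τ A Q C) 0 =
      A * (τ • deriv (coloredCorrelation n τ A Q C) 0 + C) ∧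
    (IsUnit (τ • deriv (coloredCorrelation n τ A Q C) 0 + C) →
      A = (τ • deriv (deriv (coloredCorrelation n τ A Q C)) 0 +
            deriv (coloredCorrelation n τ A Q C) 0) *
          (τ • deriv (coloredCorrelation n τ A Q C) 0 + C)⁻¹) :=
  coloredCorrelation_encodes_dynamics_general n τ hτ A Q C
end

section
/- Let A, Q, C be n×n real matrices and fix s ≥ 0. For τ > 0 small enough that I − τA is invertible, set B(τ) := (I − τA)⁻¹ and K_c(s; τ) := exp(sA)·C + exp(sA)·(∫_{u=0}^{s} e^{−u/τ}·exp(−uA) du)·Q·B(τ)ᵀ. Then K_c(s; τ) tends to exp(sA)·C as τ → 0⁺; i.e., in the memoryless limit the colored-noise correlation function converges to the white-noise correlation function K_w(s) = exp(sA)·C. -/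
open Matrix NormedSpace
open scoped Matrix.Norms.L2Operator
open Filter Topology Set

/-!
The white-noise term `exp(sA)·C` does not depend on `τ`, so it suffices that the colored-noise
correction vanishes. Since `u ↦ exp(-uA)` is bounded by some `M` on `[0, s]`, the integral in it
has norm at most `M ∫₀ˢ e^{-u/τ} du ≤ M τ`, while `(1 - τA)⁻¹ → 1` by continuity of matrix
inversion at the identity.
-/

theorem integral_exp_neg_div_le {τ : ℝ} (hτ : 0 < τ) (s : ℝ) :
    ∫ u in (0:ℝ)..s, Real.exp (-u / τ) ≤ τ := by
  have hrescale : ∫ u in (0:ℝ)..s, Real.exp (-u / τ) = τ * (1 - Real.exp (-(s / τ))) := by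
    simp only [neg_div]
    rw [intervalIntegral.integral_comp_div (fun x => Real.exp (-x)) hτ.ne']
    simp
  rw [hrescale]
  nlinarith [Real.exp_pos (-(s / τ))]

section

variable {E : Type*} [NormedAddCommGroup E] [NormedSpace ℝ E]

theorem norm_integral_exp_neg_div_smul_le {f : ℝ → E} {τ s M : ℝ} (hτ : 0 < τ) (hs : 0 ≤ s)
    (hM : ∀ u ∈ Icc 0 s, ‖f u‖ ≤ M) :
    ‖∫ u in (0:ℝ)..s, Real.exp (-u / τ) • f u‖ ≤ M * τ := by
  have hM0 : 0 ≤ M := (norm_nonneg _).trans (hM 0 ⟨le_rfl, hs⟩)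
  calc ‖∫ u in (0:ℝ)..s, Real.exp (-u / τ) • f u‖
      ≤ ∫ u in (0:ℝ)..s, Real.exp (-u / τ) * M := by
        refine intervalIntegral.norm_integral_le_of_norm_le hs
          (MeasureTheory.ae_of_all _ fun u hu => ?_)
          ((by fun_prop : Continuous fun u : ℝ => Real.exp (-u / τ) * M).intervalIntegrable _ _)
        rw [norm_smul, Real.norm_of_nonneg (Real.exp_pos _).le]
        exact mul_le_mul_of_nonneg_left (hM u (Ioc_subset_Icc_self hu)) (Real.exp_pos _).le
    _ = (∫ u in (0:ℝ)..s, Real.exp (-u / τ)) * M := intervalIntegral.integral_mul_const _ _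
    _ ≤ τ * M := mul_le_mul_of_nonneg_right (integral_exp_neg_div_le hτ s) hM0
    _ = M * τ := mul_comm _ _

theorem tendsto_integral_exp_neg_div_smul {f : ℝ → E} {s : ℝ} (hs : 0 ≤ s)
    (hf : ContinuousOn f (Icc 0 s)) :
    Tendsto (fun τ => ∫ u in (0:ℝ)..s, Real.exp (-u / τ) • f u) (𝓝[>] 0) (𝓝 0) := by
  obtain ⟨M, hM⟩ := isCompact_Icc.exists_bound_of_continuousOn hf
  have hMτ : Tendsto (fun τ : ℝ => M * τ) (𝓝[>] 0) (𝓝 0) := by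
    simpa using ((continuous_const_mul M).tendsto 0).mono_left nhdsWithin_le_nhds
  refine squeeze_zero_norm' ?_ hMτ
  filter_upwards [self_mem_nhdsWithin] with τ hτ
  exact norm_integral_exp_neg_div_smul_le hτ hs hM

end

theorem Matrix.tendsto_inv_one_sub_smul {n 𝕜 : Type*} [Fintype n] [DecidableEq n] [NormedField 𝕜]
    (A : Matrix n n 𝕜) : Tendsto (fun τ : 𝕜 => (1 - τ • A)⁻¹) (𝓝 0) (𝓝 1) := by
  have hinv : ContinuousAt Inv.inv (1 : Matrix n n 𝕜) := by
    refine continuousAt_matrix_inv 1 ?_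
    rw [det_one, Ring.inverse_eq_inv']
    exact continuousAt_inv₀ one_ne_zero
  have hlin : Tendsto (fun τ : 𝕜 => 1 - τ • A) (𝓝 0) (𝓝 1) := by
    have hcont : Continuous fun τ : 𝕜 => 1 - τ • A := by fun_prop
    simpa using hcont.tendsto 0
  have hcomp := hinv.tendsto.comp hlin
  rw [inv_one] at hcomp
  exact hcomp

/-- In the memoryless limit `τ → 0⁺`, the colored-noise correlation function
`K_c(s; τ) = exp(sA)·C + exp(sA)·(∫_0^s e^{−u/τ} exp(−uA) du)·Q·B(τ)ᵀ`, with
`B(τ) = (I − τA)⁻¹`, converges to the white-noise correlation function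
`K_w(s) = exp(sA)·C`. -/
theorem coloredCorrelation_tendsto_whiteCorrelation
    (n : ℕ) (A Q C : Matrix (Fin n) (Fin n) ℝ) (s : ℝ) (hs : 0 ≤ s) :
    Filter.Tendsto (fun τ : ℝ =>
        exp (s • A) * C +
          exp (s • A) * (∫ u in (0:ℝ)..s, Real.exp (-u/τ) • exp ((-u) • A)) * Q *
            ((1 - τ • A)⁻¹)ᵀ)
      (nhdsWithin 0 (Set.Ioi 0)) (nhds (exp (s • A) * C)) := by
  have hexp : Continuous fun u : ℝ => exp ((-u) • A) :=
    continuous_iff_continuousAt.2 (fun x => (exp_analytic (𝕂 := ℝ) x).continuousAt) |>.comp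
      (continuous_neg.smul continuous_const)
  have hintegral := tendsto_integral_exp_neg_div_smul hs hexp.continuousOn
  have hresolvent : Tendsto (fun τ : ℝ => ((1 - τ • A)⁻¹)ᵀ) (𝓝[>] 0) (𝓝 1ᵀ) :=
    (continuous_id.matrix_transpose.tendsto _).comp
      ((Matrix.tendsto_inv_one_sub_smul A).mono_left nhdsWithin_le_nhds)
  simpa using tendsto_const_nhds.add
    (((tendsto_const_nhds.mul hintegral).mul tendsto_const_nhds).mul hresolvent)
end

section
/- Let A be an n×n real matrix for which there exist M > 0 and λ > 0 such that ‖exp(tA)‖ ≤ M·e^{−λt} for all t ≥ 0, let τ > 0, let R be an n×n real matrix, and set L := fromBlocks A R 0 (−(1/τ)·I). Then there exist M′ > 0 and μ > 0 such that ‖exp(tL)‖ ≤ M′·e^{−μt} for all t ≥ 0; i.e., the augmented dynamics of the colored-noise linear system is exponentially stable whenever the original dynamics is. -/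
/-!
A Banach-algebra element `x` is exponentially stable as soon as `‖exp (T • x)‖ < 1` for one
`T > 0`, since `t ↦ ‖exp (t • x)‖` is submultiplicative and bounded on `[0, T]`. This makes
exponential stability an open condition. The block-diagonal matrix `fromBlocks A 0 0 D` is stable
when `A` and `D` are, hence so is `fromBlocks A (c • B) 0 D` for some small `c ≠ 0`, and
conjugating by `fromBlocks 1 0 0 (c⁻¹ • 1)` turns the latter into `fromBlocks A B 0 D`.
-/

open Filter Topology Set NormedSpace
open scoped Matrix.Norms.L2Operator

def DecaysExponentially (f : ℝ → ℝ) : Prop :=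
  ∃ M > (0:ℝ), ∃ μ > (0:ℝ), ∀ t ≥ (0:ℝ), f t ≤ M * Real.exp (-μ * t)

namespace DecaysExponentially

variable {f g : ℝ → ℝ}

theorem of_le (hf : DecaysExponentially f) {K : ℝ} (hK : 0 ≤ K)
    (hg : ∀ t ≥ 0, g t ≤ K * f t) : DecaysExponentially g := by
  obtain ⟨M, hM, μ, hμ, hfM⟩ := hf
  refine ⟨(K + 1) * M, by positivity, μ, hμ, fun t ht => ?_⟩
  calc g t ≤ K * f t := hg t ht
    _ ≤ K * (M * Real.exp (-μ * t)) := mul_le_mul_of_nonneg_left (hfM t ht) hK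
    _ ≤ (K + 1) * M * Real.exp (-μ * t) := by nlinarith [Real.exp_pos (-μ * t)]

theorem max (hf : DecaysExponentially f) (hg : DecaysExponentially g) :
    DecaysExponentially fun t => Max.max (f t) (g t) := by
  obtain ⟨M₁, hM₁, μ₁, hμ₁, hf⟩ := hf
  obtain ⟨M₂, hM₂, μ₂, hμ₂, hg⟩ := hg
  refine ⟨Max.max M₁ M₂, lt_max_of_lt_left hM₁, min μ₁ μ₂, lt_min hμ₁ hμ₂, fun t ht => ?_⟩
  have hbound : ∀ M μ, M ≤ Max.max M₁ M₂ → min μ₁ μ₂ ≤ μ →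
      M * Real.exp (-μ * t) ≤ Max.max M₁ M₂ * Real.exp (-min μ₁ μ₂ * t) := fun M μ hM hμ =>
    mul_le_mul hM (Real.exp_le_exp.2 (by nlinarith)) (Real.exp_pos _).le
      (hM₁.le.trans (le_max_left _ _))
  exact max_le ((hf t ht).trans (hbound _ _ (le_max_left _ _) (min_le_left _ _)))
    ((hg t ht).trans (hbound _ _ (le_max_right _ _) (min_le_right _ _)))

theorem exists_pos_lt_one (hf : DecaysExponentially f) : ∃ T > 0, f T < 1 := by
  obtain ⟨M, -, μ, hμ, hfM⟩ := hf
  have hlim : Tendsto (fun T => M * Real.exp (-μ * T)) atTop (𝓝 0) := by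
    simpa using (Real.tendsto_exp_atBot.comp
      (tendsto_id.const_mul_atTop_of_neg (neg_lt_zero.2 hμ))).const_mul M
  obtain ⟨T, hT1, hT⟩ :=
    ((hlim.eventually (gt_mem_nhds one_pos)).and (eventually_gt_atTop 0)).exists
  exact ⟨T, hT, (hfM T hT.le).trans_lt hT1⟩

end DecaysExponentially

section Submultiplicative

variable {f : ℝ → ℝ} {T : ℝ}

theorem le_mul_pow_of_submultiplicative (hT : 0 ≤ T) {q C : ℝ} (hq : 0 ≤ q)
    (hf0 : ∀ t ≥ 0, 0 ≤ f t) (hmul : ∀ s ≥ 0, ∀ t ≥ 0, f (s + t) ≤ f s * f t) (hfT : f T ≤ q)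
    (hC : ∀ t ∈ Icc 0 T, f t ≤ C) (k : ℕ) : ∀ t ∈ Icc (k * T) ((k + 1) * T), f t ≤ C * q ^ k := by
  induction k with
  | zero => simpa using hC
  | succ k ih =>
    rintro t ⟨hlo, hhi⟩
    push_cast at hlo hhi
    have hkT : 0 ≤ k * T := by positivity
    have hprev : t - T ∈ Icc (k * T) ((k + 1) * T) := ⟨by linarith, by linarith⟩
    calc f t = f (T + (t - T)) := by rw [add_sub_cancel]
      _ ≤ f T * f (t - T) := hmul T hT (t - T) (by linarith)
      _ ≤ q * (C * q ^ k) := mul_le_mul hfT (ih _ hprev) (hf0 _ (by linarith)) hq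
      _ = C * q ^ (k + 1) := by ring

theorem decaysExponentially_of_submultiplicative (hT : 0 < T) (hf0 : ∀ t ≥ 0, 0 ≤ f t)
    (hmul : ∀ s ≥ 0, ∀ t ≥ 0, f (s + t) ≤ f s * f t) (hfT : f T < 1)
    (hbdd : BddAbove (f '' Icc 0 T)) : DecaysExponentially f := by
  obtain ⟨C, hC⟩ := hbdd
  set q := max (f T) (1 / 2)
  have hq0 : 0 < q := lt_max_of_lt_right one_half_pos
  have hlog : Real.log q < 0 := Real.log_neg hq0 (max_lt hfT one_half_lt_one)
  refine ⟨max C 1 / q, by positivity, -Real.log q / T, div_pos (neg_pos.2 hlog) hT,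
    fun t ht => ?_⟩
  set k := ⌊t / T⌋₊
  have hk : t ∈ Icc (k * T) ((k + 1) * T) :=
    ⟨(le_div_iff₀ hT).1 (Nat.floor_le (by positivity)),
      ((div_le_iff₀ hT).1 (Nat.lt_floor_add_one _).le)⟩
  have hkt : t / T ≤ k + 1 := (Nat.lt_floor_add_one _).le
  -- `q ^ k = exp (k log q)` and `k ≥ t / T - 1`, with `log q < 0`.
  have hpow : q ^ k ≤ q⁻¹ * Real.exp (-(-Real.log q / T) * t) := by
    rw [← Real.exp_log hq0, ← Real.exp_nat_mul, ← Real.exp_neg, ← Real.exp_add, Real.log_exp]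
    refine Real.exp_le_exp.2 ?_
    have : -(-Real.log q / T) * t = Real.log q * (t / T) := by ring
    nlinarith
  calc f t ≤ C * q ^ k :=
        le_mul_pow_of_submultiplicative hT.le hq0.le hf0 hmul (le_max_left _ _)
          (fun s hs => hC (mem_image_of_mem f hs)) k t hk
    _ ≤ max C 1 * q ^ k := by gcongr; exact le_max_left _ _
    _ ≤ max C 1 * (q⁻¹ * Real.exp (-(-Real.log q / T) * t)) := by gcongr
    _ = max C 1 / q * Real.exp (-(-Real.log q / T) * t) := by ring

end Submultiplicative

section Banach

variable {𝔸 𝔹 : Type*} [NormedRing 𝔸] [NormedAlgebra ℝ 𝔸] [NormedRing 𝔹] [NormedAlgebra ℝ 𝔹]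

def IsExpStable (x : 𝔸) : Prop :=
  DecaysExponentially fun t => ‖exp (t • x)‖

theorem IsExpStable.exists_norm_exp_lt_one {x : 𝔸} (hx : IsExpStable x) :
    ∃ T > (0:ℝ), ‖exp (T • x)‖ < 1 :=
  DecaysExponentially.exists_pos_lt_one hx

theorem isExpStable_smul_one {c : ℝ} (hc : c < 0) : IsExpStable (c • (1 : 𝔸)) := by
  refine ⟨‖(1 : 𝔸)‖ + 1, by positivity, -c, neg_pos.2 hc, fun t _ => ?_⟩
  change ‖exp (t • c • (1 : 𝔸))‖ ≤ _
  rw [smul_smul, ← Algebra.algebraMap_eq_smul_one, ← algebraMap_exp_comm, ← Real.exp_eq_exp_ℝ,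
    norm_algebraMap, Real.norm_of_nonneg (Real.exp_pos _).le, neg_neg, mul_comm t, mul_comm]
  gcongr
  linarith

variable [CompleteSpace 𝔸]

theorem isExpStable_of_norm_exp_lt_one {x : 𝔸} {T : ℝ} (hT : 0 < T)
    (h : ‖exp (T • x)‖ < 1) : IsExpStable x := by
  let +nondep : NormedAlgebra ℚ 𝔸 := .restrictScalars ℚ ℝ 𝔸
  have hcont : Continuous fun t : ℝ => ‖exp (t • x)‖ := by fun_prop
  refine decaysExponentially_of_submultiplicative hT (fun _ _ => norm_nonneg _)
    (fun s _ t _ => ?_) h (isCompact_Icc.bddAbove_image hcont.continuousOn)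
  rw [add_smul, exp_add_of_commute (((Commute.refl x).smul_left s).smul_right t)]
  exact norm_mul_le _ _

theorem isOpen_setOf_isExpStable : IsOpen {x : 𝔸 | IsExpStable x} := by
  let +nondep : NormedAlgebra ℚ 𝔸 := .restrictScalars ℚ ℝ 𝔸
  refine isOpen_iff_mem_nhds.2 fun x hx => ?_
  obtain ⟨T, hT, hlt⟩ := IsExpStable.exists_norm_exp_lt_one hx
  have hopen : IsOpen {y : 𝔸 | ‖exp (T • y)‖ < 1} := isOpen_lt (by fun_prop) continuous_const
  filter_upwards [hopen.mem_nhds hlt] with y hy using isExpStable_of_norm_exp_lt_one hT hy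

theorem IsExpStable.of_units_conj {x : 𝔸} (u : 𝔸ˣ) (h : IsExpStable (↑u * x * ↑u⁻¹)) :
    IsExpStable x := by
  let +nondep : NormedAlgebra ℚ 𝔸 := .restrictScalars ℚ ℝ 𝔸
  refine DecaysExponentially.of_le h (K := ‖(↑u⁻¹ : 𝔸)‖ * ‖(u : 𝔸)‖) (by positivity)
    fun t _ => ?_
  have hconj : exp (t • x) = ↑u⁻¹ * exp (t • (↑u * x * ↑u⁻¹)) * ↑u := by
    rw [← smul_mul_assoc, ← mul_smul_comm, exp_units_conj]
    simp [← mul_assoc]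
  rw [hconj]
  calc _ ≤ ‖(↑u⁻¹ : 𝔸)‖ * ‖exp (t • (↑u * x * ↑u⁻¹))‖ * ‖(u : 𝔸)‖ :=
        (norm_mul_le _ _).trans (mul_le_mul_of_nonneg_right (norm_mul_le _ _) (norm_nonneg _))
    _ = _ := by ring

theorem IsExpStable.map {x : 𝔸} (φ : 𝔸 →A[ℝ] 𝔹) (hx : IsExpStable x) : IsExpStable (φ x) := by
  let +nondep : NormedAlgebra ℚ 𝔸 := .restrictScalars ℚ ℝ 𝔸
  let +nondep : NormedAlgebra ℚ 𝔹 := .restrictScalars ℚ ℝ 𝔹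
  refine DecaysExponentially.of_le hx (norm_nonneg φ.toContinuousLinearMap) fun t _ => ?_
  rw [← map_smul, ← map_exp φ φ.cont]
  exact φ.toContinuousLinearMap.le_opNorm _

theorem IsExpStable.prod [CompleteSpace 𝔹] {x : 𝔸} {y : 𝔹} (hx : IsExpStable x)
    (hy : IsExpStable y) : IsExpStable (x, y) := by
  let +nondep : NormedAlgebra ℚ 𝔸 := .restrictScalars ℚ ℝ 𝔸
  let +nondep : NormedAlgebra ℚ 𝔹 := .restrictScalars ℚ ℝ 𝔹
  refine DecaysExponentially.of_le (hx.max hy) zero_le_one fun t _ => le_of_eq ?_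
  rw [one_mul, Prod.norm_def, Prod.fst_exp, Prod.snd_exp]
  rfl

end Banach

namespace Matrix

noncomputable def fromBlocksDiagAlgHom (m n R : Type*) [Fintype m] [Fintype n] [DecidableEq m]
    [DecidableEq n] [CommRing R] [TopologicalSpace R] :
    Matrix m m R × Matrix n n R →A[R] Matrix (m ⊕ n) (m ⊕ n) R where
  toFun p := fromBlocks p.1 0 0 p.2
  map_one' := fromBlocks_one
  map_mul' p q := by simp [fromBlocks_multiply]
  map_zero' := fromBlocks_zero
  map_add' p q := by simp [fromBlocks_add]
  commutes' r := by simp [Algebra.algebraMap_eq_smul_one, fromBlocks_smul, ← fromBlocks_one]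
  cont := continuous_fst.matrix_fromBlocks continuous_const continuous_const continuous_snd

variable {m n : Type*} [Fintype m] [Fintype n] [DecidableEq m] [DecidableEq n]

theorem exists_units_conj_fromBlocks {𝕜 : Type*} [Field 𝕜] (A : Matrix m m 𝕜) (B : Matrix m n 𝕜)
    (D : Matrix n n 𝕜) {c : 𝕜} (hc : c ≠ 0) :
    ∃ u : (Matrix (m ⊕ n) (m ⊕ n) 𝕜)ˣ,
      (u : Matrix (m ⊕ n) (m ⊕ n) 𝕜) * fromBlocks A B 0 D * (↑u⁻¹ : Matrix (m ⊕ n) (m ⊕ n) 𝕜) =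
        fromBlocks A (c • B) 0 D := by
  refine ⟨⟨fromBlocks 1 0 0 (c⁻¹ • 1), fromBlocks 1 0 0 (c • 1), ?_, ?_⟩, ?_⟩ <;>
    simp [fromBlocks_multiply, hc]

theorem isExpStable_fromBlocks {A : Matrix m m ℝ} {D : Matrix n n ℝ} (hA : IsExpStable A)
    (hD : IsExpStable D) (B : Matrix m n ℝ) : IsExpStable (fromBlocks A B 0 D) := by
  have hdiag : IsExpStable (fromBlocks A 0 0 D) := (hA.prod hD).map (fromBlocksDiagAlgHom m n ℝ)
  have hlim : Tendsto (fun c : ℝ => fromBlocks A (c • B) 0 D) (𝓝 0) (𝓝 (fromBlocks A 0 0 D)) :=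
    (by fun_prop : Continuous fun c : ℝ => fromBlocks A (c • B) 0 D).tendsto' 0 _ (by simp)
  have hnear : ∀ᶠ c in 𝓝[≠] (0 : ℝ), IsExpStable (fromBlocks A (c • B) 0 D) :=
    nhdsWithin_le_nhds (hlim.eventually (isOpen_setOf_isExpStable.mem_nhds hdiag))
  obtain ⟨c, hstable, hc⟩ := (hnear.and self_mem_nhdsWithin).exists
  obtain ⟨u, hu⟩ := exists_units_conj_fromBlocks A B D hc
  exact IsExpStable.of_units_conj u (hu ▸ hstable)

end Matrix

/-- If the original dynamics `A` is exponentially stable, then so is the augmented dynamics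
`L = fromBlocks A R 0 (−(1/τ)·I)` of the colored-noise linear system. -/
theorem augmented_dynamics_exponentially_stable
    (n : ℕ) (A R : Matrix (Fin n) (Fin n) ℝ) (τ : ℝ) (hτ : 0 < τ)
    (hA : ∃ M > (0:ℝ), ∃ l > (0:ℝ), ∀ t ≥ (0:ℝ), ‖exp (t • A)‖ ≤ M * Real.exp (-l * t)) :
    ∃ M' > (0:ℝ), ∃ μ > (0:ℝ), ∀ t ≥ (0:ℝ),
      ‖exp (t • Matrix.fromBlocks A R 0 (-(1/τ) • (1 : Matrix (Fin n) (Fin n) ℝ)))‖ ≤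
        M' * Real.exp (-μ * t) :=
  -- `hA` and the goal are `IsExpStable A` and `IsExpStable (fromBlocks …)`, unfolded.
  Matrix.isExpStable_fromBlocks hA (isExpStable_smul_one (by simpa using hτ)) R
end

section
/- Let A be an n×n real matrix such that every eigenvalue μ ∈ ℂ of A (i.e., every element of the spectrum of A viewed as a complex matrix) satisfies Re(μ) < 0. Then there exist M > 0 and λ > 0 such that ‖exp(tA)‖ ≤ M·e^{−λt} for all t ≥ 0; i.e., a linear dynamics matrix all of whose eigenvalues have negative real parts generates an exponentially decaying semigroup, damping the state variables back to equilibrium. -/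
open Matrix NormedSpace
open scoped Matrix.Norms.L2Operator

/-!
The eigenvalues of `exp X` are the exponentials of those of `X`: an eigenspace of `exp X` is
invariant under the commuting matrix `X`, so it contains an eigenvector of `X`. Hence the
complexification of `exp A` has spectral radius `< 1`, and Gelfand's formula gives some `k ≥ 1` with
`‖exp (k • A)‖ ≤ e^{-l k}`. Writing `t = m k + s` with `0 ≤ s < k`, this decay propagates to all
`t ≥ 0`, the factor `exp (s • A)` staying bounded on the compact interval `[0, k]`.
-/

theorem norm_pow_mul_le {R : Type*} [NormedRing R] (x y : R) (m : ℕ) :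
    ‖x ^ m * y‖ ≤ ‖x‖ ^ m * ‖y‖ := by
  induction m with
  | zero => simp
  | succ m ih =>
    rw [pow_succ', mul_assoc, pow_succ', mul_assoc]
    exact (norm_mul_le _ _).trans (mul_le_mul_of_nonneg_left ih (norm_nonneg _))

theorem exists_norm_exp_smul_le_of_norm_exp_smul_le {𝔸 : Type*} [NormedRing 𝔸]
    [NormedAlgebra ℝ 𝔸] [CompleteSpace 𝔸] (a : 𝔸) {τ l : ℝ} (hτ : 0 < τ)
    (hτl : ‖exp (τ • a)‖ ≤ Real.exp (-l * τ)) :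
    ∃ M > 0, ∀ t ≥ 0, ‖exp (t • a)‖ ≤ M * Real.exp (-l * t) := by
  let +nondep : NormedAlgebra ℚ 𝔸 := .restrictScalars ℚ ℝ 𝔸
  obtain ⟨C, hC⟩ := (isCompact_Icc (a := 0) (b := τ)).exists_bound_of_continuousOn
    (f := fun s : ℝ => exp (s • a)) (by fun_prop)
  refine ⟨max C 1 * Real.exp (|l| * τ), by positivity, fun t ht => ?_⟩
  set m := ⌊t / τ⌋₊
  set s := t - m * τ
  have hmt : m * τ ≤ t := (le_div_iff₀ hτ).mp (Nat.floor_le (by positivity))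
  have hsτ : s < τ := by
    have := (div_lt_iff₀ hτ).mp (Nat.lt_floor_add_one (t / τ))
    simp only [s]; linarith
  have hsplit : exp (t • a) = exp (τ • a) ^ m * exp (s • a) := by
    have ht : t • a = m • (τ • a) + s • a := by
      rw [← Nat.cast_smul_eq_nsmul ℝ, smul_smul, ← add_smul]
      congr 1
      simp only [s]; ring
    rw [ht, exp_add_of_commute (((Commute.refl a).smul_left τ).smul_left m |>.smul_right s),
      NormedSpace.exp_nsmul]
  calc ‖exp (t • a)‖ ≤ ‖exp (τ • a)‖ ^ m * ‖exp (s • a)‖ := hsplit ▸ norm_pow_mul_le _ _ _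
    _ ≤ Real.exp (-l * τ) ^ m * max C 1 := by
      gcongr
      exact (hC s ⟨by simp only [s]; linarith, hsτ.le⟩).trans (le_max_left _ _)
    _ = max C 1 * Real.exp (l * s) * Real.exp (-l * t) := by
      rw [← Real.exp_nat_mul, mul_comm, mul_assoc, ← Real.exp_add]
      congr 2; simp only [s]; ring
    _ ≤ max C 1 * Real.exp (|l| * τ) * Real.exp (-l * t) := by
      gcongr max C 1 * Real.exp ?_ * _
      exact mul_le_mul (le_abs_self l) hsτ.le (by simp only [s]; linarith) (abs_nonneg l)

section ComplexBanachAlgebra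

variable {A : Type*} [NormedRing A] [NormedAlgebra ℂ A] [CompleteSpace A]

theorem spectralRadius_lt_one_of_forall_norm_lt_one {b : A} (h : ∀ μ ∈ spectrum ℂ b, ‖μ‖ < 1) :
    spectralRadius ℂ b < 1 := by
  rcases (spectrum ℂ b).eq_empty_or_nonempty with hσ | hσ
  · simp [spectralRadius, hσ]
  · exact_mod_cast spectrum.spectralRadius_lt_of_forall_lt_of_nonempty hσ (r := 1)
      fun μ hμ => by exact_mod_cast h μ hμ

theorem exists_norm_pow_le_exp_neg_mul_of_spectralRadius_lt_one {b : A}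
    (hb : spectralRadius ℂ b < 1) :
    ∃ l > 0, ∃ k : ℕ, 0 < k ∧ ‖b ^ k‖ ≤ Real.exp (-l * k) := by
  obtain ⟨r, hρr, hr1⟩ := ENNReal.lt_iff_exists_nnreal_btwn.mp hb
  have hr0 : (0 : ℝ) < r := by exact_mod_cast pos_of_gt hρr
  have hr1' : (r : ℝ) < 1 := by exact_mod_cast hr1
  obtain ⟨k, hkr, hk⟩ :=
    (((spectrum.pow_norm_pow_one_div_tendsto_nhds_spectralRadius b).eventually_lt_const hρr).and
      (Filter.eventually_gt_atTop 0)).exists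
  refine ⟨-Real.log r, neg_pos.mpr (Real.log_neg hr0 hr1'), k, hk, ?_⟩
  have hkr' : ‖b ^ k‖ ^ (k : ℝ)⁻¹ < r := by
    rw [← one_div]
    exact (ENNReal.ofReal_lt_iff_lt_toReal (by positivity) ENNReal.coe_ne_top).mp hkr
  have := (Real.rpow_inv_lt_iff_of_pos (norm_nonneg _) r.2 (by exact_mod_cast hk)).mp hkr'
  rw [neg_neg, ← Real.rpow_def_of_pos hr0]
  exact this.le

end ComplexBanachAlgebra

theorem Module.End.exists_hasEigenvector_of_commute {K V : Type*} [Field K] [IsAlgClosed K]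
    [AddCommGroup V] [Module K V] [FiniteDimensional K V] {f g : Module.End K V}
    (hfg : Commute f g) {μ : K} (hμ : f.HasEigenvalue μ) :
    ∃ c : K, ∃ v : V, f.HasEigenvector μ v ∧ g.HasEigenvector c v := by
  have hg : Set.MapsTo g (f.eigenspace μ) (f.eigenspace μ) :=
    Module.End.mapsTo_genEigenspace_of_comm hfg μ 1
  have : Nontrivial (f.eigenspace μ) := Submodule.nontrivial_iff_ne_bot.mpr hμ
  obtain ⟨c, hc⟩ := Module.End.exists_eigenvalue (g.restrict hg)
  obtain ⟨w, hw⟩ := hc.exists_hasEigenvector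
  have hw0 : (w : V) ≠ 0 := by simpa using hw.2
  exact ⟨c, w, ⟨w.2, hw0⟩,
    ⟨Module.End.mem_eigenspace_iff.mpr (congrArg Subtype.val hw.apply_eq_smul), hw0⟩⟩

theorem Matrix.exp_mulVec_of_mulVec_eq_smul {𝕂 n : Type*} [RCLike 𝕂] [Fintype n] [DecidableEq n]
    {X : Matrix n n 𝕂} {v : n → 𝕂} {c : 𝕂} (hv : X *ᵥ v = c • v) :
    exp X *ᵥ v = exp c • v := by
  have hpow (m : ℕ) : (X ^ m) *ᵥ v = c ^ m • v := by
    induction m with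
    | zero => simp
    | succ m ih => rw [pow_succ', ← mulVec_mulVec, ih, mulVec_smul, hv, smul_smul, pow_succ]
  let applyTo : Matrix n n 𝕂 →L[𝕂] (n → 𝕂) :=
    LinearMap.toContinuousLinearMap
      { toFun := (· *ᵥ v), map_add' := (add_mulVec · · v), map_smul' := (smul_mulVec · · v) }
  have hX := (exp_series_hasSum_exp' (𝕂 := 𝕂) X).mapL applyTo
  have hc := (exp_series_hasSum_exp' (𝕂 := 𝕂) c).smul_const v
  simp only [applyTo, LinearMap.coe_toContinuousLinearMap', LinearMap.coe_mk, AddHom.coe_mk,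
    smul_mulVec, hpow, smul_smul] at hX
  exact hX.unique hc

theorem Matrix.spectrum_exp_subset_exp_image {n : Type*} [Fintype n] [DecidableEq n]
    (X : Matrix n n ℂ) :
    spectrum ℂ (exp X) ⊆ exp '' spectrum ℂ X := by
  intro μ hμ
  rw [← spectrum_toLin', ← Module.End.hasEigenvalue_iff_mem_spectrum] at hμ
  obtain ⟨c, v, hexp, hX⟩ := Module.End.exists_hasEigenvector_of_commute
    ((Commute.refl X).exp_left.map toLinAlgEquiv') hμ
  refine ⟨c, ?_, ?_⟩
  · rw [← spectrum_toLin', ← Module.End.hasEigenvalue_iff_mem_spectrum]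
    exact Module.End.hasEigenvalue_of_hasEigenvector hX
  · have h1 : exp X *ᵥ v = exp c • v :=
      exp_mulVec_of_mulVec_eq_smul (by simpa using hX.apply_eq_smul)
    have h2 : exp X *ᵥ v = μ • v := by simpa using hexp.apply_eq_smul
    exact smul_left_injective ℂ hexp.2 (h1.symm.trans h2)

theorem EuclideanSpace.norm_toLp_ofReal {ι : Type*} [Fintype ι] (x : EuclideanSpace ℝ ι) :
    ‖WithLp.toLp 2 (fun i => (x i : ℂ))‖ = ‖x‖ := by
  simp [EuclideanSpace.norm_eq, Complex.norm_real]

theorem Matrix.l2_opNorm_le_l2_opNorm_map_ofReal {m n : Type*} [Fintype m] [Fintype n]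
    [DecidableEq n] (M : Matrix m n ℝ) : ‖M‖ ≤ ‖M.map (algebraMap ℝ ℂ)‖ := by
  rw [l2_opNorm_def]
  refine ContinuousLinearMap.opNorm_le_bound _ (norm_nonneg _) fun x => ?_
  calc ‖((toEuclideanLin ≪≫ₗ LinearMap.toContinuousLinearMap) M) x‖
      = ‖(EuclideanSpace.equiv m ℂ).symm
          (M.map (algebraMap ℝ ℂ) *ᵥ WithLp.ofLp (WithLp.toLp 2 fun i => (x i : ℂ)))‖ := by
        rw [← EuclideanSpace.norm_toLp_ofReal]
        congr 2
        ext i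
        exact Complex.ofRealHom.map_mulVec M x i
    _ ≤ ‖M.map (algebraMap ℝ ℂ)‖ * ‖WithLp.toLp 2 fun i => (x i : ℂ)‖ := l2_opNorm_mulVec _ _
    _ = ‖M.map (algebraMap ℝ ℂ)‖ * ‖x‖ := by rw [EuclideanSpace.norm_toLp_ofReal]

theorem Matrix.map_exp {𝕂 𝕂' n : Type*} [RCLike 𝕂] [RCLike 𝕂'] [Fintype n] [DecidableEq n]
    (f : 𝕂 →+* 𝕂') (hf : Continuous f) (X : Matrix n n 𝕂) :
    (exp X).map f = exp (X.map f) := by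
  let +nondep : NormedAlgebra ℚ (Matrix n n 𝕂) := .restrictScalars ℚ 𝕂 _
  exact NormedSpace.map_exp f.mapMatrix (continuous_id.matrix_map hf) X

/-- A linear dynamics matrix all of whose complex eigenvalues have negative real parts generates
an exponentially decaying semigroup: there exist `M > 0` and `λ > 0` with
`‖exp(tA)‖ ≤ M·e^{−λt}` for all `t ≥ 0`. -/
theorem exp_decay_of_spectrum_re_neg
    (n : ℕ) (A : Matrix (Fin n) (Fin n) ℝ)
    (hspec : ∀ μ ∈ spectrum ℂ (A.map (algebraMap ℝ ℂ)), μ.re < 0) :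
    ∃ M > (0:ℝ), ∃ l > (0:ℝ), ∀ t ≥ (0:ℝ), ‖exp (t • A)‖ ≤ M * Real.exp (-l * t) := by
  have hσ : ∀ μ ∈ spectrum ℂ (exp (A.map (algebraMap ℝ ℂ))), ‖μ‖ < 1 := by
    intro _ hμ
    obtain ⟨c, hc, rfl⟩ := Matrix.spectrum_exp_subset_exp_image _ hμ
    rw [← Complex.exp_eq_exp_ℂ, Complex.norm_exp, Real.exp_lt_one_iff]
    exact hspec c hc
  obtain ⟨l, hl, k, hk, hpow⟩ := exists_norm_pow_le_exp_neg_mul_of_spectralRadius_lt_one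
    (spectralRadius_lt_one_of_forall_norm_lt_one hσ)
  have hτ : ‖exp ((k : ℝ) • A)‖ ≤ Real.exp (-l * k) :=
    calc ‖exp ((k : ℝ) • A)‖ = ‖exp A ^ k‖ := by
          rw [Nat.cast_smul_eq_nsmul, Matrix.exp_nsmul]
      _ ≤ ‖(exp A ^ k).map (algebraMap ℝ ℂ)‖ := l2_opNorm_le_l2_opNorm_map_ofReal _
      _ = ‖exp (A.map (algebraMap ℝ ℂ)) ^ k‖ := by
          rw [Matrix.map_pow, Matrix.map_exp _ Complex.continuous_ofReal]
      _ ≤ Real.exp (-l * k) := hpow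
  obtain ⟨M, hM, hdecay⟩ := exists_norm_exp_smul_le_of_norm_exp_smul_le A (Nat.cast_pos.mpr hk) hτ
  exact ⟨M, hM, l, hl, hdecay⟩
end
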